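/- arXiv:hep-th/9402117 — 3 statements merged into one kernel-verified Lean document; each statement's English description precedes it below -/
import Mathlib

section
/- Suppose a family of nonnegative functions F_Λ satisfies the integral inequality F(Λ) ≤ ∫_Λ^{Λ₀} (λ+m)^{3-2k-z} P(log((λ+m)/m)) dλ for all Λ ∈ [0,Λ₀], where m > 0, k,z are integers with 2k+z > 4, and P is a polynomial with nonnegative coefficients. Then there exists a (possibly different) polynomial Q with nonnegative coefficients, independent of Λ and Λ₀, such that F(Λ) ≤ (Λ+m)^{4-2k-z} Q(log((Λ+m)/m)) for all Λ ∈ [0,Λ₀]. -/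
/-!
With `y = l + m` and `n = 4 - 2k - z < 0`, the integrand `y ^ (n - 1) P(log (y / m))` has the
explicit antiderivative `-y ^ n Q(log (y / m))`, where `Q` solves `-n Q - Q' = P`, namely
`Q = ∑ⱼ P⁽ʲ⁾ / (-n) ^ (j + 1)`; its coefficients are nonnegative with those of `P`. The integral
from `Λ` to `Λ₀` is then the value of `y ^ n Q(log (y / m))` at `Λ + m` minus a nonnegative
value at `Λ₀ + m`.
-/

open Real Set Polynomial

namespace Polynomial

theorem eval_nonneg_of_coeff_nonneg {P : ℝ[X]} (hP : ∀ i, 0 ≤ P.coeff i) {x : ℝ} (hx : 0 ≤ x) :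
    0 ≤ P.eval x := by
  rw [eval_eq_sum_range]
  exact Finset.sum_nonneg fun i _ => mul_nonneg (hP i) (pow_nonneg hx i)

theorem coeff_iterate_derivative_nonneg {P : ℝ[X]} (hP : ∀ i, 0 ≤ P.coeff i) (j i : ℕ) :
    0 ≤ (derivative^[j] P).coeff i := by
  rw [coeff_iterate_derivative]
  exact smul_nonneg (Nat.zero_le _) (hP _)

/-- `(c - D)⁻¹ P = ∑ D^j P / c^(j+1)`, a finite sum since the derivative `D` is nilpotent on `P`. -/
noncomputable def derivResolvent (c : ℝ) (P : ℝ[X]) : ℝ[X] :=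
  ∑ j ∈ Finset.range (P.natDegree + 1), (c⁻¹) ^ (j + 1) • derivative^[j] P

theorem coeff_derivResolvent_nonneg {c : ℝ} (hc : 0 ≤ c) {P : ℝ[X]} (hP : ∀ i, 0 ≤ P.coeff i)
    (i : ℕ) : 0 ≤ (derivResolvent c P).coeff i := by
  rw [derivResolvent, finsetSum_coeff]
  exact Finset.sum_nonneg fun j _ => by
    rw [coeff_smul, smul_eq_mul]
    exact mul_nonneg (by positivity) (coeff_iterate_derivative_nonneg hP j i)

theorem smul_derivResolvent_sub_derivative {c : ℝ} (hc : c ≠ 0) (P : ℝ[X]) :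
    c • derivResolvent c P - derivative (derivResolvent c P) = P := by
  have hvanish : derivative^[P.natDegree + 1] P = 0 := iterate_derivative_eq_zero (by omega)
  have hc_mul (j : ℕ) : c * c⁻¹ ^ (j + 1) = c⁻¹ ^ j := by
    rw [pow_succ, ← mul_assoc, mul_comm c, mul_assoc, mul_inv_cancel₀ hc, mul_one]
  simp only [derivResolvent, Finset.smul_sum, smul_smul, map_sum, derivative_smul,
    ← Function.iterate_succ_apply' derivative, ← Finset.sum_sub_distrib, hc_mul]
  rw [Finset.sum_range_sub' (fun j => (c⁻¹) ^ j • derivative^[j] P), hvanish]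
  simp

end Polynomial

theorem hasDerivAt_zpow_mul_eval_log_derivResolvent {n : ℤ} (hn : n ≠ 0) (P : ℝ[X]) {m y : ℝ}
    (hm : m ≠ 0) (hy : y ≠ 0) :
    HasDerivAt (fun y => y ^ n * (derivResolvent (-n) P).eval (log (y / m)))
      (-(y ^ (n - 1) * P.eval (log (y / m)))) y := by
  set R := derivResolvent (-n) P
  have hlog : HasDerivAt (fun y => log (y / m)) y⁻¹ y := by
    convert ((hasDerivAt_id' y).div_const m).log (div_ne_zero hy hm) using 1
    field_simp
  have hR := congrArg (eval (log (y / m)))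
    (smul_derivResolvent_sub_derivative (neg_ne_zero.mpr (Int.cast_ne_zero.mpr hn)) P)
  simp only [eval_sub, eval_smul, smul_eq_mul] at hR
  refine ((hasDerivAt_zpow n y (Or.inl hy)).mul ((R.hasDerivAt _).comp y hlog)).congr_deriv ?_
  rw [← hR, zpow_sub_one₀ hy, Function.comp_apply]
  ring

theorem integral_zpow_sub_one_mul_eval_log {n : ℤ} (hn : n ≠ 0) (P : ℝ[X]) {m a b : ℝ}
    (hm : m ≠ 0) (hab : (0 : ℝ) ∉ uIcc a b) :
    ∫ y in a..b, y ^ (n - 1) * P.eval (log (y / m)) =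
      a ^ n * (derivResolvent (-n) P).eval (log (a / m))
        - b ^ n * (derivResolvent (-n) P).eval (log (b / m)) := by
  have hne : ∀ y ∈ uIcc a b, y ≠ 0 := fun y hy h => hab (h ▸ hy)
  rw [intervalIntegral.integral_eq_sub_of_hasDerivAt (fun y hy => by
    simpa using (hasDerivAt_zpow_mul_eval_log_derivResolvent hn P hm (hne y hy)).neg)]
  · simp only [Pi.neg_apply]
    ring
  · refine ContinuousOn.intervalIntegrable fun y hy => ContinuousAt.continuousWithinAt ?_
    have := hne y hy
    fun_prop (disch := simp [*])

theorem irrelevant_vertex_integral_bound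
    (m : ℝ) (hm : 0 < m) (k z : ℕ) (hkz : 4 < 2 * k + z)
    (P : Polynomial ℝ) (hP : ∀ i, 0 ≤ P.coeff i) :
    ∃ Q : Polynomial ℝ, (∀ i, 0 ≤ Q.coeff i) ∧
      ∀ (Λ₀ : ℝ) (F : ℝ → ℝ),
        (∀ Λ ∈ Icc (0 : ℝ) Λ₀, 0 ≤ F Λ) →
        (∀ Λ ∈ Icc (0 : ℝ) Λ₀,
          F Λ ≤ ∫ l in Λ..Λ₀,
            (l + m) ^ ((3 : ℤ) - 2 * k - z) * P.eval (Real.log ((l + m) / m))) →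
        ∀ Λ ∈ Icc (0 : ℝ) Λ₀,
          F Λ ≤ (Λ + m) ^ ((4 : ℤ) - 2 * k - z) * Q.eval (Real.log ((Λ + m) / m)) := by
  set n : ℤ := 4 - 2 * k - z
  have hn : n < 0 := by omega
  set Q := derivResolvent (-n) P
  have hQ : ∀ i, 0 ≤ Q.coeff i :=
    coeff_derivResolvent_nonneg (neg_nonneg.mpr (Int.cast_nonpos.mpr hn.le)) hP
  refine ⟨Q, hQ, fun Λ₀ F _ hF Λ ⟨hΛ, hΛΛ₀⟩ => ?_⟩
  have hshift : ∫ l in Λ..Λ₀, (l + m) ^ ((3 : ℤ) - 2 * k - z) * P.eval (log ((l + m) / m)) =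
      ∫ y in Λ + m..Λ₀ + m, y ^ (n - 1) * P.eval (log (y / m)) := by
    rw [show (3 : ℤ) - 2 * k - z = n - 1 by omega]
    exact intervalIntegral.integral_comp_add_right (fun y => y ^ (n - 1) * P.eval (log (y / m))) m
  have hzero : (0 : ℝ) ∉ uIcc (Λ + m) (Λ₀ + m) := by
    rw [uIcc_of_le (by linarith)]
    exact fun h => by linarith [h.1]
  have htail : 0 ≤ (Λ₀ + m) ^ n * Q.eval (log ((Λ₀ + m) / m)) :=
    mul_nonneg (zpow_nonneg (by linarith) n)
      (eval_nonneg_of_coeff_nonneg hQ (log_nonneg ((one_le_div hm).mpr (by linarith))))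
  have hbound := hF Λ ⟨hΛ, hΛΛ₀⟩
  rw [hshift, integral_zpow_sub_one_mul_eval_log hn.ne P hm.ne' hzero] at hbound
  linarith
end

section
/- Suppose a nonnegative function D on [0, Λ₀] satisfies: D(Λ) ≤ A·(M)^{4-2n-z}·P(log(M/m)) + ∫_Λ^{M} (λ+m)^{5-2n-z} M^{-2} P(log(M/m)) dλ for Λ ∈ [0,M], where 2n+z > 5 and A ≥ 0, P a polynomial with nonnegative coefficients, 0 < m ≤ M. Then there is a polynomial Q with nonnegative coefficients (independent of M, Λ) such that D(Λ) ≤ (Λ+m)^{6-2n-z} M^{-2} Q(log(M/m)) for all Λ ∈ [0, M]. -/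
/-!
Write `e = 5 - 2n - z ≤ -1`. On `[Λ + m, M + m]` one has `x ^ e ≤ (Λ + m) ^ (e + 1) · x⁻¹`, so the
integral is at most `(Λ + m) ^ (e + 1) · log ((M + m) / (Λ + m)) ≤ (Λ + m) ^ (e + 1) (1 + log (M / m))`.
The boundary term is absorbed using `M ^ (e + 1) ≤ (Λ + m) ^ (e + 1)`, valid as `e + 1 ≤ 0`.
Hence `Q = P · (A + 1 + X)` works.
-/

open Real Set Polynomial

lemma zpow_le_zpow_left_of_nonpos₀ {a b : ℝ} {k : ℤ} (hk : k ≤ 0) (ha : 0 < a) (hab : a ≤ b) :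
    b ^ k ≤ a ^ k := by
  simpa only [zpow_neg, inv_inv] using
    inv_anti₀ (zpow_pos ha _) (zpow_le_zpow_left₀ (n := -k) (by omega) ha.le hab)

namespace Polynomial

lemma eval_nonneg_of_coeff_nonneg_s15 {p : ℝ[X]} (hp : ∀ i, 0 ≤ p.coeff i) {t : ℝ} (ht : 0 ≤ t) :
    0 ≤ p.eval t := by
  rw [eval_eq_sum_range]
  exact Finset.sum_nonneg fun i _ => mul_nonneg (hp i) (pow_nonneg ht i)

lemma coeff_mul_nonneg {p q : ℝ[X]} (hp : ∀ i, 0 ≤ p.coeff i) (hq : ∀ i, 0 ≤ q.coeff i) (i : ℕ) :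
    0 ≤ (p * q).coeff i := by
  rw [coeff_mul]
  exact Finset.sum_nonneg fun _ _ => mul_nonneg (hp _) (hq _)

lemma coeff_C_add_X_nonneg {c : ℝ} (hc : 0 ≤ c) (i : ℕ) : 0 ≤ (C c + X).coeff i := by
  rcases i with _ | _ | i <;> simp [coeff_X, hc]

end Polynomial

lemma integral_zpow_le_mul_log {a b : ℝ} {e : ℤ} (ha : 0 < a) (hab : a ≤ b) (he : e + 1 ≤ 0) :
    ∫ x in a..b, x ^ e ≤ a ^ (e + 1) * log (b / a) := by
  have hpos : ∀ x ∈ Icc a b, 0 < x := fun x hx => ha.trans_le hx.1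
  have hzero : (0 : ℝ) ∉ uIcc a b := by
    rw [uIcc_of_le hab]; exact fun h => (hpos 0 h).false
  have hne : ∀ x ∈ uIcc a b, x ≠ 0 := fun x hx h => hzero (h ▸ hx)
  have hcont : ContinuousOn (fun x : ℝ => x ^ e) (uIcc a b) :=
    continuousOn_id.zpow₀ e fun x hx => Or.inl (hne x hx)
  rw [← integral_inv hzero, ← intervalIntegral.integral_const_mul]
  refine intervalIntegral.integral_mono_on hab hcont.intervalIntegrable
    ((intervalIntegral.intervalIntegrable_inv hne continuousOn_id).const_mul _) fun x hx => ?_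
  have hx₀ := hpos x hx
  calc x ^ e = x ^ (e + 1) * x⁻¹ := by rw [zpow_add_one₀ hx₀.ne', mul_inv_cancel_right₀ hx₀.ne']
    _ ≤ a ^ (e + 1) * x⁻¹ := by
      gcongr
      exact zpow_le_zpow_left_of_nonpos₀ he ha hx.1

lemma integral_add_zpow_le {m Λ M : ℝ} {e : ℤ} (hm : 0 < m) (hΛ : 0 ≤ Λ) (hΛM : Λ ≤ M)
    (hmM : m ≤ M) (he : e + 1 ≤ 0) :
    ∫ l in Λ..M, (l + m) ^ e ≤ (Λ + m) ^ (e + 1) * (1 + log (M / m)) := by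
  have hΛm : 0 < Λ + m := by linarith
  have hM : 0 < M := hm.trans_le hmM
  have hratio : (M + m) / (Λ + m) ≤ 2 * (M / m) := by
    rw [div_le_iff₀ hΛm, mul_div_assoc', div_mul_eq_mul_div, le_div_iff₀ hm]
    nlinarith
  have hlog : log ((M + m) / (Λ + m)) ≤ 1 + log (M / m) :=
    calc log ((M + m) / (Λ + m)) ≤ log (2 * (M / m)) := log_le_log (by positivity) hratio
      _ = log 2 + log (M / m) := log_mul two_ne_zero (by positivity)
      _ ≤ 1 + log (M / m) := by linarith [log_two_lt_d9]
  rw [intervalIntegral.integral_comp_add_right (fun x => x ^ e)]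
  calc _ ≤ (Λ + m) ^ (e + 1) * log ((M + m) / (Λ + m)) :=
        integral_zpow_le_mul_log hΛm (by linarith) he
    _ ≤ _ := by gcongr

theorem decoupling_estimate_step
    (m : ℝ) (hm : 0 < m) (n z : ℕ) (hnz : 5 < 2 * n + z)
    (A : ℝ) (hA : 0 ≤ A)
    (P : Polynomial ℝ) (hP : ∀ i, 0 ≤ P.coeff i) :
    ∃ Q : Polynomial ℝ, (∀ i, 0 ≤ Q.coeff i) ∧
      ∀ M : ℝ, m ≤ M →
        ∀ D : ℝ → ℝ,
          (∀ Λ ∈ Icc (0:ℝ) M, 0 ≤ D Λ) →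
          (∀ Λ ∈ Icc (0:ℝ) M,
            D Λ ≤ A * M ^ ((4 : ℤ) - 2 * n - z) * P.eval (Real.log (M / m)) +
              ∫ l in Λ..M,
                (l + m) ^ ((5 : ℤ) - 2 * n - z) * M ^ (-2 : ℤ) *
                  P.eval (Real.log (M / m))) →
          ∀ Λ : ℝ, 0 ≤ Λ → Λ + m ≤ M →
            D Λ ≤ (Λ + m) ^ ((6 : ℤ) - 2 * n - z) * M ^ (-2 : ℤ) *
              Q.eval (Real.log (M / m)) := by
  refine ⟨P * (C (A + 1) + X), coeff_mul_nonneg hP (coeff_C_add_X_nonneg (by linarith)), ?_⟩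
  intro M hmM D _ hD Λ hΛ hΛM
  set t := log (M / m)
  set e : ℤ := 5 - 2 * n - z
  have he : e + 1 ≤ 0 := by omega
  have hM : 0 < M := hm.trans_le hmM
  have hPt : 0 ≤ P.eval t := P.eval_nonneg_of_coeff_nonneg_s15 hP (log_nonneg ((one_le_div hm).2 hmM))
  have hboundary : M ^ ((4 : ℤ) - 2 * n - z) ≤ (Λ + m) ^ (e + 1) * M ^ (-2 : ℤ) := by
    rw [show (4 : ℤ) - 2 * n - z = (e + 1) + -2 by omega, zpow_add₀ hM.ne']
    gcongr
    exact zpow_le_zpow_left_of_nonpos₀ he (by linarith) hΛM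
  have hintegral : ∫ l in Λ..M, (l + m) ^ e * M ^ (-2 : ℤ) * P.eval t
      ≤ (Λ + m) ^ (e + 1) * (1 + t) * (M ^ (-2 : ℤ) * P.eval t) := by
    simp_rw [mul_assoc, intervalIntegral.integral_mul_const, ← mul_assoc]
    gcongr
    exact integral_add_zpow_le hm hΛ (by linarith) hmM he
  rw [show (6 : ℤ) - 2 * n - z = e + 1 by omega]
  exact calc D Λ ≤ A * M ^ ((4 : ℤ) - 2 * n - z) * P.eval t
        + ∫ l in Λ..M, (l + m) ^ e * M ^ (-2 : ℤ) * P.eval t := hD Λ ⟨hΛ, by linarith⟩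
    _ ≤ A * ((Λ + m) ^ (e + 1) * M ^ (-2 : ℤ)) * P.eval t
        + (Λ + m) ^ (e + 1) * (1 + t) * (M ^ (-2 : ℤ) * P.eval t) := by gcongr
    _ = (Λ + m) ^ (e + 1) * M ^ (-2 : ℤ) * (P * (C (A + 1) + X)).eval t := by
      simp only [eval_mul, eval_add, eval_C, eval_X]
      ring
end

section
/- Let K : ℝ → ℝ be smooth with K(a)=1 for a ≤ 1, K(a)=0 for a ≥ 4, 0 ≤ K ≤ 1, and suppose all derivatives of K are bounded. Fix integers n ≥ 0, z ≥ 0. Then there exists a constant c' (depending on n, z, K but not on Λ, M, p) such that for R_M(Λ,p) = (1-K(Λ²/M²)) K(|p|²/Λ²) one has |∂_Λ R_M(Λ,p)| / (|p|²+M²)^n ≤ c' Λ^{-2n-1} · 1_{Λ ≥ M} for all Λ > 0, M > 0, p ∈ ℝ⁴ — under the additional facts that ∂_Λ R_M(Λ,p) = 0 for Λ < M and that ∂_Λ R_M(Λ,·) is supported where |p| ≤ 2Λ. -/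
set_option maxHeartbeats 1000000

theorem heavy_propagator_derivative_bound
    (K : ℝ → ℝ) (hK : ContDiff ℝ (⊤ : ℕ∞) K)
    (hK1 : ∀ a : ℝ, a ≤ 1 → K a = 1)
    (hK0 : ∀ a : ℝ, 4 ≤ a → K a = 0)
    (hKrange : ∀ a : ℝ, 0 ≤ K a ∧ K a ≤ 1)
    (hKderiv : ∀ k : ℕ, ∃ B : ℝ, ∀ a : ℝ, |iteratedDeriv k K a| ≤ B)
    (n z : ℕ)
    (dR : ℝ → ℝ → EuclideanSpace ℝ (Fin 4) → ℝ)
    (hd : ∀ M : ℝ, 0 < M → ∀ Λ : ℝ, 0 < Λ → ∀ p : EuclideanSpace ℝ (Fin 4),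
      HasDerivAt (fun Λ' : ℝ => (1 - K (Λ' ^ 2 / M ^ 2)) * K (‖p‖ ^ 2 / Λ' ^ 2))
        (dR M Λ p) Λ)
    (hvanish : ∀ M : ℝ, 0 < M → ∀ Λ : ℝ, 0 < Λ → Λ < M →
      ∀ p : EuclideanSpace ℝ (Fin 4), dR M Λ p = 0)
    (hsupp : ∀ M : ℝ, 0 < M → ∀ Λ : ℝ, 0 < Λ →
      ∀ p : EuclideanSpace ℝ (Fin 4), 2 * Λ < ‖p‖ → dR M Λ p = 0) :
    ∃ c' : ℝ, 0 < c' ∧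
      ∀ M : ℝ, 0 < M → ∀ Λ : ℝ, 0 < Λ → ∀ p : EuclideanSpace ℝ (Fin 4),
        |dR M Λ p| / (‖p‖ ^ 2 + M ^ 2) ^ n ≤
          c' * Λ ^ (-(2 * n : ℤ) - 1) * (if M ≤ Λ then 1 else 0) := by
  obtain ⟨B, hB⟩ := hKderiv 1
  have hB' : ∀ a : ℝ, |deriv K a| ≤ B := by
    intro a; simpa [iteratedDeriv_one] using hB a
  have hB0 : 0 ≤ B := le_trans (abs_nonneg _) (hB' 0)
  have hKd : Differentiable ℝ K := hK.differentiable (by simp)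
  -- deriv K vanishes off [1,4]
  have hd1 : ∀ a : ℝ, a < 1 → deriv K a = 0 := by
    intro a ha
    have hev : K =ᶠ[nhds a] fun _ => (1 : ℝ) :=
      Filter.eventually_of_mem (Iio_mem_nhds ha) fun x hx => hK1 x (le_of_lt hx)
    rw [hev.deriv_eq, deriv_const]
  have hd4 : ∀ a : ℝ, 4 < a → deriv K a = 0 := by
    intro a ha
    have hev : K =ᶠ[nhds a] fun _ => (0 : ℝ) :=
      Filter.eventually_of_mem (Ioi_mem_nhds ha) fun x hx => hK0 x (le_of_lt hx)
    rw [hev.deriv_eq, deriv_const]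
  refine ⟨16 * (B + 1) * 4 ^ n, by positivity, ?_⟩
  intro M hM Λ hΛ p
  by_cases hMΛ : M ≤ Λ
  · rw [if_pos hMΛ, mul_one]
    by_cases hp : 2 * Λ < ‖p‖
    · rw [hsupp M hM Λ hΛ p hp, abs_zero, zero_div]
      positivity
    push_neg at hp
    -- compute dR explicitly
    have hΛ2 : (Λ : ℝ) ^ 2 ≠ 0 := by positivity
    have hM2 : (M : ℝ) ^ 2 ≠ 0 := by positivity
    set T1 : ℝ := -(deriv K (Λ ^ 2 / M ^ 2) * (2 * Λ / M ^ 2)) * K (‖p‖ ^ 2 / Λ ^ 2) with hT1def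
    set T2 : ℝ := (1 - K (Λ ^ 2 / M ^ 2)) * (deriv K (‖p‖ ^ 2 / Λ ^ 2) * (-(2 * ‖p‖ ^ 2) / Λ ^ 3)) with hT2def
    have hD : HasDerivAt (fun Λ' : ℝ => (1 - K (Λ' ^ 2 / M ^ 2)) * K (‖p‖ ^ 2 / Λ' ^ 2))
        (T1 + T2) Λ := by
      have h1 : HasDerivAt (fun Λ' : ℝ => Λ' ^ 2 / M ^ 2) (2 * Λ / M ^ 2) Λ := by
        simpa using (hasDerivAt_pow 2 Λ).div_const (M ^ 2)
      have h2 : HasDerivAt (fun Λ' : ℝ => ‖p‖ ^ 2 / Λ' ^ 2)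
          (-(2 * ‖p‖ ^ 2) / Λ ^ 3) Λ := by
        have := (hasDerivAt_const Λ (‖p‖ ^ 2)).div (hasDerivAt_pow 2 Λ) hΛ2
        refine this.congr_deriv ?_
        field_simp
        ring
      have hc1 : HasDerivAt (fun Λ' : ℝ => K (Λ' ^ 2 / M ^ 2))
          (deriv K (Λ ^ 2 / M ^ 2) * (2 * Λ / M ^ 2)) Λ :=
        (hKd.differentiableAt.hasDerivAt).comp Λ h1
      have hc2 : HasDerivAt (fun Λ' : ℝ => K (‖p‖ ^ 2 / Λ' ^ 2))
          (deriv K (‖p‖ ^ 2 / Λ ^ 2) * (-(2 * ‖p‖ ^ 2) / Λ ^ 3)) Λ :=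
        (hKd.differentiableAt.hasDerivAt).comp Λ h2
      have := ((hasDerivAt_const Λ (1 : ℝ)).sub hc1).mul hc2
      refine this.congr_deriv ?_
      rw [hT1def, hT2def]; simp only [Pi.sub_apply]; ring
    have hdR : dR M Λ p = T1 + T2 := (hd M hM Λ hΛ p).unique hD
    -- positivity facts
    have hden : (0 : ℝ) < ‖p‖ ^ 2 + M ^ 2 := by positivity
    have hdenn : (0 : ℝ) < (‖p‖ ^ 2 + M ^ 2) ^ n := by positivity
    have hP : (0 : ℝ) < Λ ^ (2 * n) := by positivity
    have hzpow : (Λ : ℝ) ^ (-(2 * n : ℤ) - 1) = 1 / Λ ^ (2 * n + 1) := by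
      have he : (-(2 * n : ℤ) - 1) = -((2 * n + 1 : ℕ) : ℤ) := by push_cast; ring
      rw [he, zpow_neg, zpow_natCast, one_div]
    rw [hdR, hzpow]
    have habs : |T1 + T2| ≤ |T1| + |T2| := abs_add_le _ _
    have key1 : |T1| / (‖p‖ ^ 2 + M ^ 2) ^ n ≤ 8 * (B + 1) * 4 ^ n / Λ ^ (2 * n + 1) := by
      by_cases hs : 1 ≤ Λ ^ 2 / M ^ 2 ∧ Λ ^ 2 / M ^ 2 ≤ 4
      · obtain ⟨hs1, hs2⟩ := hs
        have hM2pos : (0 : ℝ) < M ^ 2 := by positivity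
        have hl : M ^ 2 ≤ Λ ^ 2 := by
          rw [le_div_iff₀ hM2pos] at hs1; linarith
        have hu : Λ ^ 2 ≤ 4 * M ^ 2 := by
          rw [div_le_iff₀ hM2pos] at hs2; linarith
        have hT1b : |T1| ≤ B * (2 * Λ / M ^ 2) := by
          rw [hT1def, abs_mul, abs_neg, abs_mul]
          have h1 : |deriv K (Λ ^ 2 / M ^ 2)| ≤ B := hB' _
          have h2 : |K (‖p‖ ^ 2 / Λ ^ 2)| ≤ 1 := by
            rw [abs_le]; constructor
            · linarith [(hKrange (‖p‖ ^ 2 / Λ ^ 2)).1]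
            · exact (hKrange (‖p‖ ^ 2 / Λ ^ 2)).2
          have h3 : |2 * Λ / M ^ 2| = 2 * Λ / M ^ 2 := by
            rw [abs_of_nonneg]; positivity
          rw [h3]
          calc |deriv K (Λ ^ 2 / M ^ 2)| * (2 * Λ / M ^ 2) * |K (‖p‖ ^ 2 / Λ ^ 2)|
              ≤ B * (2 * Λ / M ^ 2) * 1 := by
                apply mul_le_mul _ h2 (abs_nonneg _) (by positivity)
                exact mul_le_mul_of_nonneg_right h1 (by positivity)
            _ = B * (2 * Λ / M ^ 2) := by ring
        have hdenl : Λ ^ 2 / 4 ≤ ‖p‖ ^ 2 + M ^ 2 := by nlinarith [sq_nonneg ‖p‖]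
        have hdennl : (Λ ^ 2 / 4) ^ n ≤ (‖p‖ ^ 2 + M ^ 2) ^ n :=
          pow_le_pow_left₀ (by positivity) hdenl n
        have hq : (0 : ℝ) < (Λ ^ 2 / 4) ^ n := by positivity
        calc |T1| / (‖p‖ ^ 2 + M ^ 2) ^ n
            ≤ (B * (2 * Λ / M ^ 2)) / (Λ ^ 2 / 4) ^ n :=
              div_le_div₀ (by positivity) hT1b hq hdennl
          _ ≤ 8 * (B + 1) * 4 ^ n / Λ ^ (2 * n + 1) := by
              rw [div_pow, div_le_div_iff₀ (by positivity) (by positivity)]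
              have h4 : (0 : ℝ) < (4:ℝ) ^ n := by positivity
              have hL : B * (2 * Λ / M ^ 2) * Λ ^ (2 * n + 1)
                  = (2 * B * Λ ^ 2 * Λ ^ (2 * n)) / M ^ 2 := by
                rw [pow_succ]; field_simp; ring
              have hR : 8 * (B + 1) * 4 ^ n * ((Λ ^ 2) ^ n / 4 ^ n)
                  = 8 * (B + 1) * Λ ^ (2 * n) := by
                rw [← pow_mul]; field_simp
              rw [hL, hR, div_le_iff₀ hM2pos]
              linarith [mul_nonneg (mul_nonneg (by linarith : (0:ℝ) ≤ 4 * M ^ 2 - Λ ^ 2) hB0) hP.le,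
                mul_nonneg hM2pos.le hP.le]
      · have : deriv K (Λ ^ 2 / M ^ 2) = 0 := by
          rcases not_and_or.mp hs with h | h
          · exact hd1 _ (lt_of_not_ge h)
          · exact hd4 _ (lt_of_not_ge h)
        rw [hT1def, this]
        simp only [zero_mul, neg_zero, abs_zero, zero_div]
        positivity
    have key2 : |T2| / (‖p‖ ^ 2 + M ^ 2) ^ n ≤ 8 * (B + 1) * 4 ^ n / Λ ^ (2 * n + 1) := by
      by_cases hs : 1 ≤ ‖p‖ ^ 2 / Λ ^ 2 ∧ ‖p‖ ^ 2 / Λ ^ 2 ≤ 4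
      · obtain ⟨hs1, hs2⟩ := hs
        have hΛ2pos : (0 : ℝ) < Λ ^ 2 := by positivity
        have hl : Λ ^ 2 ≤ ‖p‖ ^ 2 := by
          rw [le_div_iff₀ hΛ2pos] at hs1; linarith
        have hu : ‖p‖ ^ 2 ≤ 4 * Λ ^ 2 := by
          rw [div_le_iff₀ hΛ2pos] at hs2; linarith
        have hT2b : |T2| ≤ B * (2 * ‖p‖ ^ 2 / Λ ^ 3) := by
          rw [hT2def, abs_mul, abs_mul]
          have h1 : |deriv K (‖p‖ ^ 2 / Λ ^ 2)| ≤ B := hB' _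
          have h2 : |1 - K (Λ ^ 2 / M ^ 2)| ≤ 1 := by
            rw [abs_le]; constructor
            · linarith [(hKrange (Λ ^ 2 / M ^ 2)).2]
            · linarith [(hKrange (Λ ^ 2 / M ^ 2)).1]
          have h3 : |(-(2 * ‖p‖ ^ 2) / Λ ^ 3)| = 2 * ‖p‖ ^ 2 / Λ ^ 3 := by
            rw [neg_div, abs_neg, abs_of_nonneg]; positivity
          rw [h3]
          calc |1 - K (Λ ^ 2 / M ^ 2)| * (|deriv K (‖p‖ ^ 2 / Λ ^ 2)| * (2 * ‖p‖ ^ 2 / Λ ^ 3))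
              ≤ 1 * (B * (2 * ‖p‖ ^ 2 / Λ ^ 3)) := by
                apply mul_le_mul h2 _ (by positivity) (by norm_num)
                exact mul_le_mul_of_nonneg_right h1 (by positivity)
            _ = B * (2 * ‖p‖ ^ 2 / Λ ^ 3) := by ring
        have hdennl : (Λ ^ 2) ^ n ≤ (‖p‖ ^ 2 + M ^ 2) ^ n :=
          pow_le_pow_left₀ (by positivity) (by linarith [sq_nonneg M]) n
        calc |T2| / (‖p‖ ^ 2 + M ^ 2) ^ n
            ≤ (B * (2 * ‖p‖ ^ 2 / Λ ^ 3)) / (Λ ^ 2) ^ n :=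
              div_le_div₀ (by positivity) hT2b (by positivity) hdennl
          _ ≤ 8 * (B + 1) * 4 ^ n / Λ ^ (2 * n + 1) := by
              rw [div_le_div_iff₀ (by positivity) (by positivity)]
              have hΛ3 : (0:ℝ) < Λ ^ 3 := by positivity
              have h4 : (1 : ℝ) ≤ (4:ℝ) ^ n := one_le_pow₀ (by norm_num)
              have hL : B * (2 * ‖p‖ ^ 2 / Λ ^ 3) * Λ ^ (2 * n + 1)
                  = (2 * B * ‖p‖ ^ 2 * (Λ ^ (2 * n) * Λ)) / Λ ^ 3 := by
                rw [pow_succ]; field_simp; ring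
              have hR : 8 * (B + 1) * 4 ^ n * (Λ ^ 2) ^ n
                  = 8 * (B + 1) * 4 ^ n * Λ ^ (2 * n) := by rw [← pow_mul]
              rw [hL, hR, div_le_iff₀ hΛ3]
              nlinarith [mul_nonneg (mul_nonneg (by linarith : (0:ℝ) ≤ 4 * Λ ^ 2 - ‖p‖ ^ 2) hB0)
                  (mul_nonneg hP.le hΛ.le),
                mul_nonneg (mul_nonneg (by linarith : (0:ℝ) ≤ (4:ℝ) ^ n - 1)
                  (by linarith : (0:ℝ) ≤ 8 * (B + 1))) (mul_nonneg hP.le hΛ3.le),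
                mul_nonneg hP.le hΛ3.le]
      · have : deriv K (‖p‖ ^ 2 / Λ ^ 2) = 0 := by
          rcases not_and_or.mp hs with h | h
          · exact hd1 _ (lt_of_not_ge h)
          · exact hd4 _ (lt_of_not_ge h)
        rw [hT2def, this]
        simp only [zero_mul, mul_zero, abs_zero, zero_div]
        positivity
    calc |T1 + T2| / (‖p‖ ^ 2 + M ^ 2) ^ n
        ≤ (|T1| + |T2|) / (‖p‖ ^ 2 + M ^ 2) ^ n := by
          gcongr
      _ = |T1| / (‖p‖ ^ 2 + M ^ 2) ^ n + |T2| / (‖p‖ ^ 2 + M ^ 2) ^ n := add_div _ _ _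
      _ ≤ 8 * (B + 1) * 4 ^ n / Λ ^ (2 * n + 1) + 8 * (B + 1) * 4 ^ n / Λ ^ (2 * n + 1) :=
          add_le_add key1 key2
      _ = 16 * (B + 1) * 4 ^ n * (1 / Λ ^ (2 * n + 1)) := by ring
  · rw [if_neg hMΛ, mul_zero]
    rw [hvanish M hM Λ hΛ (lt_of_not_ge hMΛ) p, abs_zero, zero_div]
end
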